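/- Let 0 < α < 1. Then for every real numbers a > 0 and b ∈ ℝ one has |a^α − |b|^{α−1} b| ≤ 2^{1−α} a^{α−1} |a − b|, where |b|^{α−1} b is understood to be 0 when b = 0. -/

import Mathlib

open MeasureTheory Filter Set Metric
open scoped Topology NNReal ENNReal

noncomputable section

/-- Euclidean space `ℝ^N`. -/
abbrev EucSp (N : ℕ) : Type := EuclideanSpace ℝ (Fin N)

variable {N : ℕ}

/-- A smooth test function compactly supported in `Ω`. -/
def TestFun (Ω : Set (EucSp N)) (φ : EucSp N → ℝ) : Prop :=
  ContDiff ℝ (⊤ : ℕ∞) φ ∧ HasCompactSupport φ ∧ tsupport φ ⊆ Ω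

/-- Membership in the homogeneous Sobolev space `𝒟^{1,2}_0(Ω)`: `u` is a limit of smooth
functions with compact support in `Ω`, both in the Dirichlet energy and in `L²`. -/
def MemD12 (Ω : Set (EucSp N)) (u : EucSp N → ℝ) : Prop :=
  ∃ φ : ℕ → EucSp N → ℝ, (∀ n, TestFun Ω (φ n)) ∧
    Tendsto (fun n => ∫ x, ‖gradient (φ n) x - gradient u x‖ ^ 2) atTop (nhds 0) ∧
    Tendsto (fun n => ∫ x, (φ n x - u x) ^ 2) atTop (nhds 0)

/-- `u ∈ 𝒟^{1,2}_0(Ω)` is a weak solution of the Lane–Emden equation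
`-Δu = |u|^{q-2} u` in `Ω`, `u = 0` on `∂Ω`. -/
def IsLaneEmden (Ω : Set (EucSp N)) (q : ℝ) (u : EucSp N → ℝ) : Prop :=
  MemD12 Ω u ∧ ∀ φ, TestFun Ω φ →
    (∫ x in Ω, (inner ℝ (gradient u x) (gradient φ x) : ℝ))
      = ∫ x in Ω, |u x| ^ (q - 2) * u x * φ x

/-- The Lane–Emden energy functional `𝔉_q`. -/
def LEEnergy (Ω : Set (EucSp N)) (q : ℝ) (u : EucSp N → ℝ) : ℝ :=
  (1 / 2) * (∫ x in Ω, ‖gradient u x‖ ^ 2) - (1 / q) * ∫ x in Ω, |u x| ^ q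

/-- `w = w_{Ω,q}` is the positive least energy solution of the Lane–Emden equation, i.e. the
(unique) nonnegative minimizer of the energy `𝔉_q` over `𝒟^{1,2}_0(Ω)`; it is positive and
continuous inside `Ω`. -/
def IsLeastEnergySol (Ω : Set (EucSp N)) (q : ℝ) (w : EucSp N → ℝ) : Prop :=
  MemD12 Ω w ∧ (∀ x, 0 ≤ w x) ∧ (∀ x ∈ Ω, 0 < w x) ∧ ContinuousOn w Ω ∧
    ∀ v, MemD12 Ω v → (∀ x, 0 ≤ v x) → LEEnergy Ω q w ≤ LEEnergy Ω q v

/-- The `q`-spectrum of the Dirichlet-Laplacian on `Ω`: `lam ∈ Spec(Ω;q)` iff the equation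
`-Δu = lam ‖u‖_{L^q}^{2-q} |u|^{q-2} u` has a nontrivial weak solution in `𝒟^{1,2}_0(Ω)`. -/
def qSpectrum (Ω : Set (EucSp N)) (q : ℝ) : Set ℝ :=
  {lam | ∃ u : EucSp N → ℝ, MemD12 Ω u ∧
    ¬ (u =ᵐ[MeasureTheory.volume.restrict Ω] (fun _ => (0 : ℝ))) ∧
    ∀ φ, TestFun Ω φ →
      (∫ x in Ω, (inner ℝ (gradient u x) (gradient φ x) : ℝ))
        = lam * (∫ x in Ω, |u x| ^ q) ^ ((2 - q) / q)
            * ∫ x in Ω, |u x| ^ (q - 2) * u x * φ x}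

/-- The first `q`-eigenvalue `λ₁(Ω;q)`, i.e. the sharp Poincaré–Sobolev constant. -/
def lambda1 (Ω : Set (EucSp N)) (q : ℝ) : ℝ :=
  sInf {t | ∃ u : EucSp N → ℝ, MemD12 Ω u ∧ (∫ x in Ω, |u x| ^ q) = 1 ∧
    t = ∫ x in Ω, ‖gradient u x‖ ^ 2}

/-- Compactness of the embedding `𝒟^{1,2}_0(Ω) ↪ L²(Ω; w^{q-2})`: any sequence with uniformly
bounded Dirichlet energy has a subsequence converging in the weighted `L²` space. -/
def CompactEmbeddingWeighted (Ω : Set (EucSp N)) (q : ℝ) (w : EucSp N → ℝ) : Prop :=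
  ∀ u : ℕ → EucSp N → ℝ, (∀ n, MemD12 Ω (u n)) →
    (∃ C : ℝ, ∀ n, (∫ x in Ω, ‖gradient (u n) x‖ ^ 2) ≤ C) →
    ∃ (g : EucSp N → ℝ) (σ : ℕ → ℕ), StrictMono σ ∧
      Tendsto (fun n => ∫ x in Ω, w x ^ (q - 2) * (u (σ n) x - g x) ^ 2) atTop (nhds 0)

/-- `Ω` has finitely many connected components. -/
def FinitelyManyComponents (Ω : Set (EucSp N)) : Prop :=
  {C : Set (EucSp N) | ∃ x ∈ Ω, C = connectedComponentIn Ω x}.Finite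

/-- The boundary of `Ω` is locally the graph of a function satisfying the property `P`, with
`Ω` lying on one side of the graph. -/
def BoundaryGraph (Ω : Set (EucSp N))
    (P : (EuclideanSpace ℝ (Fin (N - 1)) → ℝ) → Prop) : Prop :=
  ∀ x₀ ∈ frontier Ω, ∃ r h : ℝ, 0 < r ∧ 0 < h ∧
    ∃ (f : EucSp N ≃ᵢ WithLp 2 (EuclideanSpace ℝ (Fin (N - 1)) × ℝ))
      (φ : EuclideanSpace ℝ (Fin (N - 1)) → ℝ),
      P φ ∧ f x₀ = 0 ∧
      ∀ (y : EuclideanSpace ℝ (Fin (N - 1))) (t : ℝ), ‖y‖ < r → |t| < h →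
        ((f.symm ((WithLp.equiv 2 _).symm (y, t)) ∈ frontier Ω ↔ t = φ y) ∧
         (f.symm ((WithLp.equiv 2 _).symm (y, t)) ∈ Ω ↔ φ y < t))

/-- An open bounded Lipschitz set. -/
def IsLipschitzSet (Ω : Set (EucSp N)) : Prop :=
  IsOpen Ω ∧ Bornology.IsBounded Ω ∧
    BoundaryGraph Ω fun φ => ∃ L : ℝ≥0, LipschitzWith L φ

/-- An open bounded set of class `C¹`. -/
def IsC1Set (Ω : Set (EucSp N)) : Prop :=
  IsOpen Ω ∧ Bornology.IsBounded Ω ∧ BoundaryGraph Ω fun φ => ContDiff ℝ 1 φ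

/-- The first coordinate `⟨x, e₁⟩` of a point of `ℝ^N`. -/
def firstCoord (x : EucSp N) : ℝ := if h : 0 < N then x ⟨0, h⟩ else 0

/-- The spherical cap `𝒮(β) = {ω ∈ 𝕊^{N-1} : β < ⟨ω, e₁⟩}`. -/
def sphericalCap (N : ℕ) (β : ℝ) : Set (EucSp N) := {ω | ‖ω‖ = 1 ∧ β < firstCoord ω}

/-- The open axially symmetric cone `Γ(β,R)` of radius `R`. -/
def openCone (N : ℕ) (β R : ℝ) : Set (EucSp N) :=
  {x | 0 < ‖x‖ ∧ ‖x‖ < R ∧ β * ‖x‖ < firstCoord x}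

/-- The infinite open cone `Γ(β,+∞)`. -/
def openConeInf (N : ℕ) (β : ℝ) : Set (EucSp N) :=
  {x | 0 < ‖x‖ ∧ β * ‖x‖ < firstCoord x}

/-- The `0`-homogeneous extension of a function on the unit sphere. -/
def homExt (ψ : EucSp N → ℝ) : EucSp N → ℝ := fun x => ψ (‖x‖⁻¹ • x)

/-- The first Dirichlet eigenvalue `λ(𝒮(β))` of the Laplace–Beltrami operator on the spherical
cap `𝒮(β)`, defined variationally via the Rayleigh quotient: tangential gradients are gradients
of `0`-homogeneous extensions, and integration on the sphere is with respect to the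
`(N-1)`-dimensional Hausdorff measure. -/
def capEigenvalue (N : ℕ) (β : ℝ) : ℝ :=
  sInf {t | ∃ ψ : EucSp N → ℝ,
    ContDiffOn ℝ (⊤ : ℕ∞) (homExt ψ) {x : EucSp N | x ≠ 0} ∧
    closure {ω : EucSp N | ‖ω‖ = 1 ∧ ψ ω ≠ 0} ⊆ sphericalCap N β ∧
    (∫ ω in sphericalCap N β, (ψ ω) ^ 2 ∂(μH[(N : ℝ) - 1])) = 1 ∧
    t = ∫ ω in sphericalCap N β, ‖gradient (homExt ψ) ω‖ ^ 2 ∂(μH[(N : ℝ) - 1])}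

/-- The exponent `α(β)`, positive root of `α (N - 2 + α) = λ(𝒮(β))`. -/
def alphaOf (N : ℕ) (β : ℝ) : ℝ :=
  (Real.sqrt (((N : ℝ) - 2) ^ 2 + 4 * capEigenvalue N β) - ((N : ℝ) - 2)) / 2

/-- `Ω` satisfies an inner cone condition of index `β`: there is `0 < R < diam Ω` such that
every point of `closure Ω` at distance at most `R` from the boundary is the vertex of an
isometric copy of the cone `Γ(β,R)` contained in `Ω`. -/
def InnerConeCondition (Ω : Set (EucSp N)) (β : ℝ) : Prop :=
  ∃ R : ℝ, 0 < R ∧ R < Metric.diam Ω ∧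
    ∀ x ∈ closure Ω, Metric.infDist x (frontier Ω) ≤ R →
      ∃ f : EucSp N ≃ᵢ EucSp N, f 0 = x ∧ f '' openCone N β R ⊆ Ω

/-- The cone index `β_Ω`. -/
def coneIndex (Ω : Set (EucSp N)) : ℝ :=
  sInf {β : ℝ | β ∈ Ioo (0 : ℝ) 1 ∧ InnerConeCondition Ω β}

/-- The homogeneity index `α_Ω = α(β_Ω)`. -/
def homIndex (Ω : Set (EucSp N)) : ℝ := alphaOf N (coneIndex Ω)

/-- `V` is a weak solution of `-ΔV = V^{q-1}` in the open set `U`. -/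
def IsWeakSolutionOn (U : Set (EucSp N)) (q : ℝ) (V : EucSp N → ℝ) : Prop :=
  ∀ φ, TestFun U φ →
    (∫ x in U, (inner ℝ (gradient V x) (gradient φ x) : ℝ)) = ∫ x in U, V x ^ (q - 1) * φ x

/-- Membership in `𝒟^{1,2}_0(𝒮(β))`, the Dirichlet Sobolev space on the spherical cap:
approximation by smooth functions compactly supported in the open cap, in the `H¹` sense on
the sphere (tangential gradients are gradients of `0`-homogeneous extensions). -/
def MemD12Cap (N : ℕ) (β : ℝ) (ψ : EucSp N → ℝ) : Prop :=
  ∃ Ψ : ℕ → EucSp N → ℝ,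
    (∀ n, ContDiffOn ℝ (⊤ : ℕ∞) (homExt (Ψ n)) {x : EucSp N | x ≠ 0} ∧
      closure {ω : EucSp N | ‖ω‖ = 1 ∧ Ψ n ω ≠ 0} ⊆ sphericalCap N β) ∧
    Tendsto (fun n => ∫ ω in sphericalCap N β,
        ‖gradient (homExt (Ψ n)) ω - gradient (homExt ψ) ω‖ ^ 2 ∂(μH[(N : ℝ) - 1]))
      atTop (nhds 0) ∧
    Tendsto (fun n => ∫ ω in sphericalCap N β, (Ψ n ω - ψ ω) ^ 2 ∂(μH[(N : ℝ) - 1]))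
      atTop (nhds 0)

/-- The Hardy-type constant `σ`: sharp constant for
`σ ∫ |φ|² V^{q-2} ≤ ∫ |∇φ|²` over test functions on `U`. -/
def hardyQuot (U : Set (EucSp N)) (q : ℝ) (V : EucSp N → ℝ) : ℝ :=
  sInf {t | ∃ φ : EucSp N → ℝ, TestFun U φ ∧ ¬ (∀ x, φ x = 0) ∧
    t = (∫ x in U, ‖gradient φ x‖ ^ 2) / ∫ x in U, V x ^ (q - 2) * φ x ^ 2}

/-- The positive `2/(2-q)`-homogeneous solution `V` of `-ΔV = V^{q-1}` on the infinite cone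
`Γ(β,∞)`. -/
def IsHomogSpecialSolution (N : ℕ) (β q : ℝ) (V : EucSp N → ℝ) : Prop :=
  (∀ x ∈ openConeInf N β, 0 < V x) ∧
  (∀ c : ℝ, 0 < c → ∀ x : EucSp N, V (c • x) = c ^ (2 / (2 - q)) * V x) ∧
  IsWeakSolutionOn (openConeInf N β) q V

/-- The "concentration energy at the tip" of the cone `Γ(β,R)` with weight `w^{q-2}`:
infimum over nontrivial test functions `φ` of the limit of the Rayleigh quotients of the
rescalings `φ_n(x) = n^{(N-2)/2} φ(n x)`. -/
def concEnergy (N : ℕ) (β R q : ℝ) (w : EucSp N → ℝ) : ℝ :=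
  sInf {L | ∃ φ : EucSp N → ℝ, TestFun (openCone N β R) φ ∧ ¬ (∀ x, φ x = 0) ∧
    Tendsto (fun n : ℕ =>
        (∫ x in openCone N β R,
          ‖gradient (fun y => (n : ℝ) ^ (((N : ℝ) - 2) / 2) * φ ((n : ℝ) • y)) x‖ ^ 2) /
        ∫ x in openCone N β R,
          w x ^ (q - 2) * ((n : ℝ) ^ (((N : ℝ) - 2) / 2) * φ ((n : ℝ) • x)) ^ 2)
      atTop (nhds L)}


/-- Concavity estimate: for `0 < x ≤ y` and `0 < α ≤ 1`,
`y^α - x^α ≤ α x^{α-1} (y - x)`. -/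
lemma conc_rpow_aux (α : ℝ) (hα1 : 0 < α) (hα2 : α ≤ 1) (x y : ℝ) (hx : 0 < x)
    (hxy : x ≤ y) : y ^ α - x ^ α ≤ α * x ^ (α - 1) * (y - x) := by
  set s : ℝ := (y - x) / x with hs_def
  have hs0 : 0 ≤ s := by
    apply div_nonneg (by linarith) hx.le
  have hber : (1 + s) ^ α ≤ 1 + α * s :=
    rpow_one_add_le_one_add_mul_self (by linarith) hα1.le hα2
  have hy : y = x * (1 + s) := by
    rw [hs_def, mul_add, mul_one, mul_div_cancel₀ (y - x) hx.ne']; ring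
  have hxα : x ^ (α - 1) = x ^ α / x := by
    rw [Real.rpow_sub hx, Real.rpow_one]
  have h1 : y ^ α = x ^ α * (1 + s) ^ α := by
    rw [hy, Real.mul_rpow hx.le (by linarith)]
  have h2 : y ^ α ≤ x ^ α * (1 + α * s) := by
    rw [h1]
    exact mul_le_mul_of_nonneg_left hber (Real.rpow_nonneg hx.le _)
  have h3 : x ^ α * (1 + α * s) = x ^ α + α * x ^ (α - 1) * (y - x) := by
    rw [hxα, hs_def]
    field_simp
  linarith [h2, h3.symm.le]

/-- Subadditivity of `x ↦ x^α` for `0 ≤ α ≤ 1` on nonnegative reals. -/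
lemma rpow_add_le_add_rpow_real (α : ℝ) (hα1 : 0 ≤ α) (hα2 : α ≤ 1) (u v : ℝ)
    (hu : 0 ≤ u) (hv : 0 ≤ v) : (u + v) ^ α ≤ u ^ α + v ^ α := by
  have := NNReal.rpow_add_le_add_rpow (⟨u, hu⟩ : ℝ≥0) (⟨v, hv⟩ : ℝ≥0) hα1 hα2
  have h2 := NNReal.coe_le_coe.2 this
  push_cast at h2
  convert h2 using 2 <;> rfl

/-- Midpoint concavity: `u^α + v^α ≤ 2^{1-α} (u+v)^α`. -/
lemma add_rpow_le_two_rpow (α : ℝ) (hα1 : 0 ≤ α) (hα2 : α ≤ 1) (u v : ℝ)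
    (hu : 0 ≤ u) (hv : 0 ≤ v) : u ^ α + v ^ α ≤ 2 ^ (1 - α) * (u + v) ^ α := by
  have hcc := (Real.concaveOn_rpow hα1 hα2).2 (Set.mem_Ici.2 hu) (Set.mem_Ici.2 hv)
    (by norm_num : (0:ℝ) ≤ 1/2) (by norm_num : (0:ℝ) ≤ 1/2) (by norm_num)
  simp only [smul_eq_mul] at hcc
  have hmid : (1/2 * u + 1/2 * v) ^ α = (u + v) ^ α / 2 ^ α := by
    rw [show 1/2 * u + 1/2 * v = (u + v) / 2 by ring,
      Real.div_rpow (by linarith) (by norm_num)]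
  rw [hmid] at hcc
  have h2α : (0:ℝ) < 2 ^ α := Real.rpow_pos_of_pos two_pos _
  have h2' : (2:ℝ) ^ (1 - α) = 2 / 2 ^ α := by
    rw [Real.rpow_sub two_pos, Real.rpow_one]
  have h22 : (2:ℝ) ^ (1 - α) * 2 ^ α = 2 := by
    rw [← Real.rpow_add two_pos]; norm_num
  rw [le_div_iff₀ h2α] at hcc
  have h2pos' : (0:ℝ) < 2 ^ (1 - α) := Real.rpow_pos_of_pos two_pos _
  have h5 : 2 ^ (1 - α) * ((1 / 2 * u ^ α + 1 / 2 * v ^ α) * 2 ^ α) = u ^ α + v ^ α := by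
    linear_combination (1 / 2 * u ^ α + 1 / 2 * v ^ α) * h22
  calc u ^ α + v ^ α = 2 ^ (1 - α) * ((1 / 2 * u ^ α + 1 / 2 * v ^ α) * 2 ^ α) := h5.symm
    _ ≤ 2 ^ (1 - α) * (u + v) ^ α := mul_le_mul_of_nonneg_left hcc h2pos'.le

/-- **A pointwise inequality.** For `0 < α < 1`, `a > 0` and `b ∈ ℝ`,
`|a^α - |b|^{α-1} b| ≤ 2^{1-α} a^{α-1} |a - b|`. -/
theorem abs_rpow_sub_odd_rpow_le
    (α : ℝ) (hα1 : 0 < α) (hα2 : α < 1) (a b : ℝ) (ha : 0 < a) :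
    |a ^ α - |b| ^ (α - 1) * b| ≤ 2 ^ (1 - α) * a ^ (α - 1) * |a - b| := by
  have haα : (0:ℝ) < a ^ α := Real.rpow_pos_of_pos ha _
  have haα1 : (0:ℝ) < a ^ (α - 1) := Real.rpow_pos_of_pos ha _
  have h2pos : (0:ℝ) < 2 ^ (1 - α) := Real.rpow_pos_of_pos two_pos _
  have h2ge1 : (1:ℝ) ≤ 2 ^ (1 - α) :=
    Real.one_le_rpow one_le_two (by linarith)
  rcases le_or_gt b 0 with hb | hb
  · -- b ≤ 0
    set c : ℝ := -b with hc_def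
    have hc : 0 ≤ c := by linarith
    have hcα : (0:ℝ) ≤ c ^ α := Real.rpow_nonneg hc _
    have hodd : |b| ^ (α - 1) * b = -(c ^ α) := by
      rcases eq_or_lt_of_le hb with rfl | hb'
      · simp [hc_def, Real.zero_rpow (by linarith : α - 1 ≠ 0),
          Real.zero_rpow (ne_of_gt hα1)]
      · have hcpos : 0 < c := by simpa [hc_def] using hb'
        have : |b| = c := by rw [abs_of_neg hb']
        rw [this, show b = -c by simp [hc_def]]
        rw [mul_neg, ← Real.rpow_add_one (ne_of_gt hcpos)]
        ring_nf
    have habs : |a - b| = a + c := by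
      rw [abs_of_pos (by linarith : 0 < a - b)]; ring
    rw [hodd, habs, sub_neg_eq_add, abs_of_pos (by linarith : 0 < a ^ α + c ^ α)]
    have h1 : a ^ α + c ^ α ≤ 2 ^ (1 - α) * (a + c) ^ α :=
      add_rpow_le_two_rpow α hα1.le hα2.le a c ha.le hc
    have h2 : (a + c) ^ α ≤ a ^ (α - 1) * (a + c) := by
      have hac : (a + c) ^ α = (a + c) ^ (α - 1) * (a + c) := by
        rw [← Real.rpow_add_one ((by linarith : (0:ℝ) < a + c).ne')]; ring_nf
      rw [hac]
      have := Real.rpow_le_rpow_of_nonpos ha (by linarith : a ≤ a + c)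
        (by linarith : α - 1 ≤ 0)
      exact mul_le_mul_of_nonneg_right this (by linarith)
    calc a ^ α + c ^ α ≤ 2 ^ (1 - α) * (a + c) ^ α := h1
      _ ≤ 2 ^ (1 - α) * (a ^ (α - 1) * (a + c)) :=
          mul_le_mul_of_nonneg_left h2 h2pos.le
      _ = 2 ^ (1 - α) * a ^ (α - 1) * (a + c) := by ring
  · -- 0 < b
    have hbα : (0:ℝ) < b ^ α := Real.rpow_pos_of_pos hb _
    have hodd : |b| ^ (α - 1) * b = b ^ α := by
      rw [abs_of_pos hb, ← Real.rpow_add_one (ne_of_gt hb)]; ring_nf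
    rw [hodd]
    rcases le_or_gt a b with hab | hab
    · -- a ≤ b
      have hmono : a ^ α ≤ b ^ α := Real.rpow_le_rpow ha.le hab hα1.le
      rw [abs_of_nonpos (by linarith), abs_of_nonpos (by linarith)]
      have hcc := conc_rpow_aux α hα1 hα2.le a b ha hab
      have : α * a ^ (α - 1) * (b - a) ≤ 2 ^ (1 - α) * a ^ (α - 1) * (b - a) := by
        apply mul_le_mul_of_nonneg_right _ (by linarith)
        apply mul_le_mul_of_nonneg_right _ haα1.le
        linarith
      linarith
    · -- b < a
      have hmono : b ^ α ≤ a ^ α := Real.rpow_le_rpow hb.le hab.le hα1.le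
      rw [abs_of_nonneg (by linarith), abs_of_pos (by linarith : 0 < a - b)]
      have hhalf : (a / 2) ^ (α - 1) = 2 ^ (1 - α) * a ^ (α - 1) := by
        have h22 : (2:ℝ) ^ (1 - α) * 2 ^ (α - 1) = 1 := by
          rw [← Real.rpow_add two_pos]; norm_num
        rw [Real.div_rpow ha.le (by norm_num),
          div_eq_iff (ne_of_gt (Real.rpow_pos_of_pos two_pos (α - 1)))]
        linear_combination (-(a ^ (α - 1))) * h22
      rcases le_or_gt b (a / 2) with hb2 | hb2
      · -- b ≤ a/2 : use subadditivity
        have hsub : a ^ α ≤ (a - b) ^ α + b ^ α := by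
          have := rpow_add_le_add_rpow_real α hα1.le hα2.le (a - b) b
            (by linarith) hb.le
          simpa using this
        have h1 : a ^ α - b ^ α ≤ (a - b) ^ α := by linarith
        have h2 : (a - b) ^ α = (a - b) ^ (α - 1) * (a - b) := by
          rw [← Real.rpow_add_one ((by linarith : (0:ℝ) < a - b).ne')]; ring_nf
        have h3 : (a - b) ^ (α - 1) ≤ (a / 2) ^ (α - 1) :=
          Real.rpow_le_rpow_of_nonpos (by linarith) (by linarith) (by linarith)
        calc a ^ α - b ^ α ≤ (a - b) ^ (α - 1) * (a - b) := by rw [← h2]; exact h1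
          _ ≤ (a / 2) ^ (α - 1) * (a - b) :=
              mul_le_mul_of_nonneg_right h3 (by linarith)
          _ = 2 ^ (1 - α) * a ^ (α - 1) * (a - b) := by rw [hhalf]
      · -- a/2 < b < a : use concavity at b
        have hcc := conc_rpow_aux α hα1 hα2.le b a hb hab.le
        have h3 : b ^ (α - 1) ≤ (a / 2) ^ (α - 1) :=
          Real.rpow_le_rpow_of_nonpos (by linarith) (by linarith) (by linarith)
        have hb1 : (0:ℝ) < b ^ (α - 1) := Real.rpow_pos_of_pos hb _
        have h4 : α * b ^ (α - 1) * (a - b) ≤ (a / 2) ^ (α - 1) * (a - b) := by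
          apply mul_le_mul_of_nonneg_right _ (by linarith)
          calc α * b ^ (α - 1) ≤ 1 * b ^ (α - 1) :=
                mul_le_mul_of_nonneg_right (by linarith) hb1.le
            _ = b ^ (α - 1) := one_mul _
            _ ≤ (a / 2) ^ (α - 1) := h3
        rw [hhalf] at h4
        linarith

end
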